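/- arXiv:2511.21063 — 7 statements merged into one kernel-verified Lean document; each statement's English description precedes it below -/
import Mathlib

section
/- For all x, y ∈ [-1,1], one has (4/π²)(x−y)² ≤ ((2/π)arcsin(x) − (2/π)arcsin(y))² ≤ (4/π²)(x−y)² + 2(1 − 4/π²)(x⁴ + y⁴). -/
/-!
The lower bound is the 1-Lipschitz property of `sin`, read at `arcsin x` and `arcsin y`.

For the upper bound write `a = arcsin x`, `b = arcsin y`, so that
`(a - b)² - (x - y)² = ((a - b) + (x - y)) * ((a - x) - (b - y))`. The first factor is at most
`(π/2 + 1)(|x| + |y|)` since `|arcsin t| ≤ π/2 |t|`, and the second at most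
`(π/2 - 1)(|x|³ + |y|³)` since `|arcsin t - t| ≤ (π/2 - 1)|t|³`; Chebyshev's inequality
`(|x| + |y|)(|x|³ + |y|³) ≤ 2(x⁴ + y⁴)` finishes.

The cubic bound says that `(θ - sin θ) / sin³ θ` is largest at `θ = π/2` on `(0, π/2]`. This
ratio is monotone because its derivative has the sign of `2 sin θ + tan θ - 3θ`, which is
nonnegative by Huygens' inequality.
-/

open Real Set

namespace Real

lemma three_mul_le_two_mul_sin_add_tan {θ : ℝ} (h0 : 0 ≤ θ) (h1 : θ < π / 2) :
    3 * θ ≤ 2 * sin θ + tan θ := by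
  have hcos : ∀ y ∈ Ico 0 (π / 2), 0 < cos y := fun y hy =>
    cos_pos_of_mem_Ioo ⟨by linarith [pi_pos, hy.1], hy.2⟩
  have hderiv : ∀ y ∈ Ico 0 (π / 2), HasDerivAt (fun y => 2 * sin y + tan y - 3 * y)
      (2 * cos y + 1 / cos y ^ 2 - 3) y := fun y hy => by
    simpa using (((hasDerivAt_sin y).const_mul 2).fun_add
      (hasDerivAt_tan (hcos y hy).ne')).fun_sub ((hasDerivAt_id y).const_mul 3)
  have hmono : MonotoneOn (fun y => 2 * sin y + tan y - 3 * y) (Ico 0 (π / 2)) := by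
    refine monotoneOn_of_hasDerivWithinAt_nonneg (convex_Ico 0 (π / 2))
      (fun y hy => (hderiv y hy).continuousAt.continuousWithinAt)
      (fun y hy => (hderiv y (interior_subset hy)).hasDerivWithinAt) fun y hy => ?_
    have hc := hcos y (interior_subset hy)
    -- AM-GM for `cos y, cos y, 1 / cos y ^ 2`
    rw [show 2 * cos y + 1 / cos y ^ 2 - 3 = (1 - cos y) ^ 2 * (1 + 2 * cos y) / cos y ^ 2 by
      field_simp; ring]
    positivity
  simpa using hmono ⟨le_rfl, by positivity⟩ ⟨h0, h1⟩ h0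

lemma monotoneOn_sub_sin_div_sin_pow_three :
    MonotoneOn (fun θ => (θ - sin θ) / sin θ ^ 3) (Ioc 0 (π / 2)) := by
  have hsin : ∀ y ∈ Ioc 0 (π / 2), 0 < sin y := fun y hy =>
    sin_pos_of_pos_of_lt_pi hy.1 (by linarith [pi_pos, hy.2])
  have hderiv : ∀ y ∈ Ioc 0 (π / 2), HasDerivAt (fun θ => (θ - sin θ) / sin θ ^ 3)
      (((1 - cos y) * sin y ^ 3 - (y - sin y) * (3 * sin y ^ 2 * cos y)) / (sin y ^ 3) ^ 2) y :=
    fun y hy => by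
      refine ((hasDerivAt_id y).sub (hasDerivAt_sin y)).div ?_ (pow_pos (hsin y hy) 3).ne'
      simpa using (hasDerivAt_sin y).fun_pow 3
  refine monotoneOn_of_hasDerivWithinAt_nonneg (convex_Ioc 0 (π / 2))
    (fun y hy => (hderiv y hy).continuousAt.continuousWithinAt)
    (fun y hy => (hderiv y (interior_subset hy)).hasDerivWithinAt) fun y hy => ?_
  rw [interior_Ioc] at hy
  have hs := hsin y (Ioo_subset_Ioc_self hy)
  have hc : 0 < cos y := cos_pos_of_mem_Ioo ⟨by linarith [pi_pos, hy.1], hy.2⟩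
  have huygens := three_mul_le_two_mul_sin_add_tan hy.1.le hy.2
  rw [tan_eq_sin_div_cos] at huygens
  rw [show (1 - cos y) * sin y ^ 3 - (y - sin y) * (3 * sin y ^ 2 * cos y)
      = sin y ^ 2 * cos y * (2 * sin y + sin y / cos y - 3 * y) by field_simp; ring]
  have : 0 ≤ 2 * sin y + sin y / cos y - 3 * y := by linarith
  positivity

lemma arcsin_sub_self_le {t : ℝ} (h0 : 0 ≤ t) (h1 : t ≤ 1) :
    arcsin t - t ≤ (π / 2 - 1) * t ^ 3 := by
  rcases h0.eq_or_lt with rfl | ht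
  · simp
  have hmem : arcsin t ∈ Ioc 0 (π / 2) := ⟨arcsin_pos.2 ht, arcsin_le_pi_div_two t⟩
  have hend : π / 2 ∈ Ioc 0 (π / 2) := ⟨by positivity, le_rfl⟩
  have := monotoneOn_sub_sin_div_sin_pow_three hmem hend hmem.2
  simp only [sin_arcsin (by linarith) h1, sin_pi_div_two] at this
  rwa [one_pow, div_one, div_le_iff₀ (by positivity)] at this

lemma abs_arcsin_sub_self_le {t : ℝ} (h0 : -1 ≤ t) (h1 : t ≤ 1) :
    |arcsin t - t| ≤ (π / 2 - 1) * |t| ^ 3 := by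
  wlog ht : 0 ≤ t generalizing t
  · simpa [arcsin_neg, neg_add_eq_sub, abs_sub_comm] using
      this (t := -t) (by linarith) (by linarith) (by linarith)
  have hle : t ≤ arcsin t := by
    simpa [sin_arcsin h0 h1] using sin_le (arcsin_nonneg.2 ht)
  rw [abs_of_nonneg (sub_nonneg.2 hle), abs_of_nonneg ht]
  exact arcsin_sub_self_le ht h1

lemma abs_arcsin_le {t : ℝ} (h0 : -1 ≤ t) (h1 : t ≤ 1) : |arcsin t| ≤ π / 2 * |t| := by
  have h := mul_abs_le_abs_sin (abs_le.2 ⟨neg_pi_div_two_le_arcsin t, arcsin_le_pi_div_two t⟩)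
  rw [sin_arcsin h0 h1] at h
  rw [div_mul_eq_mul_div, div_le_iff₀ pi_pos] at h
  linarith

lemma sq_sub_le_sq_arcsin_sub {x y : ℝ} (hx : x ∈ Icc (-1 : ℝ) 1) (hy : y ∈ Icc (-1 : ℝ) 1) :
    (x - y) ^ 2 ≤ (arcsin x - arcsin y) ^ 2 := by
  have h := abs_sin_sub_sin_le (arcsin x) (arcsin y)
  rw [sin_arcsin hx.1 hx.2, sin_arcsin hy.1 hy.2] at h
  exact sq_le_sq.2 h

lemma sq_arcsin_sub_le {x y : ℝ} (hx : x ∈ Icc (-1 : ℝ) 1) (hy : y ∈ Icc (-1 : ℝ) 1) :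
    (arcsin x - arcsin y) ^ 2 ≤ (x - y) ^ 2 + 2 * (π ^ 2 / 4 - 1) * (x ^ 4 + y ^ 4) := by
  set a := arcsin x
  set b := arcsin y
  have hsum : |a - b + (x - y)| ≤ (π / 2 + 1) * (|x| + |y|) := by
    have := abs_arcsin_le hx.1 hx.2
    have := abs_arcsin_le hy.1 hy.2
    have := abs_add_le (a - b) (x - y)
    have := abs_sub a b
    have := abs_sub x y
    linarith
  have hdiff : |(a - x) - (b - y)| ≤ (π / 2 - 1) * (|x| ^ 3 + |y| ^ 3) := by
    have := abs_arcsin_sub_self_le hx.1 hx.2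
    have := abs_arcsin_sub_self_le hy.1 hy.2
    have := abs_sub (a - x) (b - y)
    linarith
  have hchebyshev : (|x| + |y|) * (|x| ^ 3 + |y| ^ 3) ≤ 2 * (x ^ 4 + y ^ 4) := by
    rw [← Even.pow_abs (by decide) x, ← Even.pow_abs (by decide) y]
    nlinarith [mul_nonneg (sq_nonneg (|x| - |y|))
      (add_nonneg (add_nonneg (sq_nonneg |x|) (mul_nonneg (abs_nonneg x) (abs_nonneg y)))
        (sq_nonneg |y|))]
  have hπ : 1 ≤ π / 2 := by linarith [pi_gt_three]
  calc (a - b) ^ 2 = (x - y) ^ 2 + (a - b + (x - y)) * ((a - x) - (b - y)) := by ring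
    _ ≤ (x - y) ^ 2 + |a - b + (x - y)| * |(a - x) - (b - y)| := by
        rw [← abs_mul]; gcongr; exact le_abs_self _
    _ ≤ (x - y) ^ 2 + (π / 2 + 1) * (|x| + |y|) * ((π / 2 - 1) * (|x| ^ 3 + |y| ^ 3)) := by
        gcongr
    _ = (x - y) ^ 2 + (π / 2 + 1) * (π / 2 - 1) * ((|x| + |y|) * (|x| ^ 3 + |y| ^ 3)) := by ring
    _ ≤ (x - y) ^ 2 + (π / 2 + 1) * (π / 2 - 1) * (2 * (x ^ 4 + y ^ 4)) := by
        gcongr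
    _ = (x - y) ^ 2 + 2 * (π ^ 2 / 4 - 1) * (x ^ 4 + y ^ 4) := by ring

end Real

theorem stmt_1 (x y : ℝ) (hx : x ∈ Set.Icc (-1 : ℝ) 1) (hy : y ∈ Set.Icc (-1 : ℝ) 1) :
    (4 / π ^ 2) * (x - y) ^ 2 ≤ ((2 / π) * arcsin x - (2 / π) * arcsin y) ^ 2 ∧
    ((2 / π) * arcsin x - (2 / π) * arcsin y) ^ 2 ≤
      (4 / π ^ 2) * (x - y) ^ 2 + 2 * (1 - 4 / π ^ 2) * (x ^ 4 + y ^ 4) := by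
  have hscale : ((2 / π) * arcsin x - (2 / π) * arcsin y) ^ 2
      = 4 / π ^ 2 * (arcsin x - arcsin y) ^ 2 := by ring
  have hconst : 4 / π ^ 2 * (2 * (π ^ 2 / 4 - 1)) = 2 * (1 - 4 / π ^ 2) := by
    field_simp
  rw [hscale]
  constructor
  · exact mul_le_mul_of_nonneg_left (sq_sub_le_sq_arcsin_sub hx hy) (by positivity)
  · calc 4 / π ^ 2 * (arcsin x - arcsin y) ^ 2
        ≤ 4 / π ^ 2 * ((x - y) ^ 2 + 2 * (π ^ 2 / 4 - 1) * (x ^ 4 + y ^ 4)) := by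
          gcongr
          exact sq_arcsin_sub_le hx hy
      _ = 4 / π ^ 2 * (x - y) ^ 2 + 2 * (1 - 4 / π ^ 2) * (x ^ 4 + y ^ 4) := by
          linear_combination (x ^ 4 + y ^ 4) * hconst
end

section
/- For all x, y ∈ [-1,1], ((2/π)arcsin(x) − (2/π)arcsin(y))² ≤ (4/π²)(x−y)² + (6/5)(x⁴ + y⁴). -/
/-!
Writing `c = π/2 - 1`, the remainder of `arcsin t = t + r t` satisfies `0 ≤ r t ≤ c t³` on
`[0, 1]` (equality at `t = 1`). In the variable `θ = arcsin t` this reads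
`θ ≤ sin θ + c sin³ θ`, which follows from `sin θ ≥ θ - θ³/6` for `θ ≤ 1` and from
`sin θ = cos (π/2 - θ) ≥ 1 - (π/2 - θ)²/2` for `θ ≥ 1`, since `s ↦ s + c s³` is monotone.
Expanding `(x - y + r x - r y)²`, the cross term and the square of the remainders are bounded by
`(4c + 2c²)(x⁴ + y⁴) = (π²/2 - 2)(x⁴ + y⁴)`, and `4/π² · (π²/2 - 2) ≤ 6/5` because `π² ≤ 10`.
-/

open Real

lemma le_sub_cube_add_mul_pow_three {θ c : ℝ} (h0 : 0 ≤ θ) (h1 : θ ≤ 1) (hc : 1 / 2 ≤ c) :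
    θ ≤ θ - θ ^ 3 / 6 + c * (θ - θ ^ 3 / 6) ^ 3 := by
  have hθ2 : θ ^ 2 ≤ 1 := pow_le_one₀ h0 h1
  have h5 : 5 / 6 * θ ≤ θ - θ ^ 3 / 6 := by nlinarith
  have h125 : (5 / 6 * θ) ^ 3 ≤ (θ - θ ^ 3 / 6) ^ 3 := by gcongr
  nlinarith [pow_nonneg h0 3, mul_le_mul_of_nonneg_left h125 (by linarith : (0 : ℝ) ≤ c)]

lemma add_sub_le_sq_add_mul_pow_three {φ c : ℝ} (h0 : 0 ≤ φ) (hφ : φ ≤ c) (hc : c ≤ 0.575) :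
    1 + c - φ ≤ 1 - φ ^ 2 / 2 + c * (1 - φ ^ 2 / 2) ^ 3 := by
  have hw : φ ^ 2 / 2 ≤ 3 := by nlinarith
  have hcube : 1 - 3 * (φ ^ 2 / 2) ≤ (1 - φ ^ 2 / 2) ^ 3 := by
    nlinarith [mul_nonneg (sq_nonneg (φ ^ 2 / 2)) (sub_nonneg.mpr hw)]
  nlinarith [mul_le_mul_of_nonneg_left hcube (h0.trans hφ), mul_le_mul_of_nonneg_left hφ h0]

lemma pi_div_two_sub_one_mem_Icc : π / 2 - 1 ∈ Set.Icc (1 / 2 : ℝ) 0.575 := by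
  constructor <;> linarith [pi_gt_three, pi_lt_d2]

lemma le_sin_add_mul_sin_pow_three {θ : ℝ} (h0 : 0 ≤ θ) (h1 : θ ≤ π / 2) :
    θ ≤ sin θ + (π / 2 - 1) * sin θ ^ 3 := by
  obtain ⟨hc₁, hc₂⟩ := pi_div_two_sub_one_mem_Icc
  have hc₀ : (0 : ℝ) ≤ π / 2 - 1 := by linarith
  rcases le_total θ 1 with hθ | hθ
  · have hp : 0 ≤ θ - θ ^ 3 / 6 := by nlinarith [pow_le_one₀ h0 hθ (n := 2)]
    have hsin := sin_ge_sub_cube h0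
    calc θ ≤ _ := le_sub_cube_add_mul_pow_three h0 hθ hc₁
      _ ≤ _ := by gcongr
  · have hφ : 0 ≤ π / 2 - θ := by linarith
    have hq : 0 ≤ 1 - (π / 2 - θ) ^ 2 / 2 := by nlinarith
    have hcos : 1 - (π / 2 - θ) ^ 2 / 2 ≤ sin θ := by
      simpa only [cos_pi_div_two_sub] using one_sub_sq_div_two_le_cos (x := π / 2 - θ)
    calc θ = 1 + (π / 2 - 1) - (π / 2 - θ) := by ring
      _ ≤ _ := add_sub_le_sq_add_mul_pow_three hφ (by linarith) hc₂
      _ ≤ _ := by gcongr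

lemma arcsin_sub_self_mem_Icc {t : ℝ} (h0 : 0 ≤ t) (h1 : t ≤ 1) :
    arcsin t - t ∈ Set.Icc 0 ((π / 2 - 1) * t ^ 3) := by
  have hθ : 0 ≤ arcsin t := arcsin_nonneg.mpr h0
  have hsin : sin (arcsin t) = t := sin_arcsin (by linarith) h1
  constructor
  · simpa [hsin] using sin_le hθ
  · have := le_sin_add_mul_sin_pow_three hθ (arcsin_le_pi_div_two t)
    rw [hsin] at this
    linarith

lemma abs_arcsin_sub_self_le {t : ℝ} (ht : |t| ≤ 1) :
    |arcsin t - t| ≤ (π / 2 - 1) * |t| ^ 3 := by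
  wlog h0 : 0 ≤ t generalizing t
  · have := this (t := -t) (by rwa [abs_neg]) (by linarith)
    rwa [arcsin_neg, abs_neg, neg_sub_neg, abs_sub_comm] at this
  obtain ⟨hlo, hhi⟩ := arcsin_sub_self_mem_Icc h0 (abs_le.mp ht).2
  rwa [abs_of_nonneg h0, abs_of_nonneg hlo]

lemma sq_add_sub_add_le {x y a b c : ℝ} (hc : 0 ≤ c) (hx : |x| ≤ 1) (hy : |y| ≤ 1)
    (ha : |a| ≤ c * |x| ^ 3) (hb : |b| ≤ c * |y| ^ 3) :
    (x + a - (y + b)) ^ 2 ≤ (x - y) ^ 2 + (4 * c + 2 * c ^ 2) * (x ^ 4 + y ^ 4) := by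
  have hu : 0 ≤ |x| := abs_nonneg x
  have hv : 0 ≤ |y| := abs_nonneg y
  have hab : |a - b| ≤ c * (|x| ^ 3 + |y| ^ 3) := by linarith [abs_sub a b]
  have hcross : (x - y) * (a - b) ≤ (|x| + |y|) * (c * (|x| ^ 3 + |y| ^ 3)) :=
    calc (x - y) * (a - b) ≤ |x - y| * |a - b| := by rw [← abs_mul]; exact le_abs_self _
      _ ≤ (|x| + |y|) * (c * (|x| ^ 3 + |y| ^ 3)) := by gcongr; exact abs_sub x y
  have hsq : (a - b) ^ 2 ≤ (c * (|x| ^ 3 + |y| ^ 3)) ^ 2 := by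
    rw [← sq_abs]; gcongr
  have hmix : (|x| + |y|) * (|x| ^ 3 + |y| ^ 3) ≤ 2 * (|x| ^ 4 + |y| ^ 4) := by
    nlinarith [mul_nonneg (sq_nonneg (|x| - |y|))
      (by positivity : (0 : ℝ) ≤ |x| ^ 2 + |x| * |y| + |y| ^ 2)]
  have hcubes : (|x| ^ 3 + |y| ^ 3) ^ 2 ≤ 2 * (|x| ^ 4 + |y| ^ 4) := by
    nlinarith [sq_nonneg (|x| ^ 3 - |y| ^ 3), pow_le_pow_of_le_one hu hx (by norm_num : 4 ≤ 6),
      pow_le_pow_of_le_one hv hy (by norm_num : 4 ≤ 6)]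
  rw [← Even.pow_abs (by decide) x, ← Even.pow_abs (by decide) y]
  nlinarith [mul_le_mul_of_nonneg_left hmix hc, mul_le_mul_of_nonneg_left hcubes (sq_nonneg c)]

theorem stmt_2 (x y : ℝ) (hx : x ∈ Set.Icc (-1 : ℝ) 1) (hy : y ∈ Set.Icc (-1 : ℝ) 1) :
    ((2 / π) * arcsin x - (2 / π) * arcsin y) ^ 2 ≤
      (4 / π ^ 2) * (x - y) ^ 2 + (6 / 5) * (x ^ 4 + y ^ 4) := by
  have hx' : |x| ≤ 1 := abs_le.mpr hx
  have hy' : |y| ≤ 1 := abs_le.mpr hy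
  have hc : (0 : ℝ) ≤ π / 2 - 1 := by linarith [pi_div_two_sub_one_mem_Icc.1]
  have key := sq_add_sub_add_le hc hx' hy' (abs_arcsin_sub_self_le hx')
    (abs_arcsin_sub_self_le hy')
  rw [add_sub_cancel, add_sub_cancel] at key
  have hconst : 4 / π ^ 2 * (4 * (π / 2 - 1) + 2 * (π / 2 - 1) ^ 2) ≤ 6 / 5 := by
    rw [div_mul_eq_mul_div, div_le_iff₀ (by positivity)]
    nlinarith [pi_lt_d2, pi_pos]
  calc ((2 / π) * arcsin x - (2 / π) * arcsin y) ^ 2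
      = 4 / π ^ 2 * (arcsin x - arcsin y) ^ 2 := by ring
    _ ≤ 4 / π ^ 2 * ((x - y) ^ 2
          + (4 * (π / 2 - 1) + 2 * (π / 2 - 1) ^ 2) * (x ^ 4 + y ^ 4)) := by gcongr
    _ ≤ 4 / π ^ 2 * (x - y) ^ 2 + 6 / 5 * (x ^ 4 + y ^ 4) := by
      rw [mul_add, ← mul_assoc]; gcongr
end

section
/- For every x ∈ [-1,1], the function h(x) = (π²/4 − 1)x⁴ + x² − arcsin²(x) is nonnegative. -/
/-!
Substitute `x = sin θ` with `θ = arcsin x ∈ [-π/2, π/2]`; by evenness take `θ ≥ 0`. The claim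
becomes `θ² ≤ (π²/4 - 1) sin⁴ θ + sin² θ`, which is an equality at `θ = 0` and at `θ = π/2`.
For `θ ≤ 1` the Taylor bound `sin θ ≥ θ - θ³/6` already gives it with coefficient `1` in front of
`sin⁴ θ`. For `θ ≥ 1` write `θ = π/2 - φ`; then `sin θ = cos φ ≥ 1 - φ²/2`, so
`sin² θ ≥ 1 - φ²` and `sin⁴ θ ≥ 1 - 2φ²`, and what remains is `φ (2 - π φ) ≥ 0`, true for
`φ ≤ π/2 - 1 < 2/π`.
-/

open Real

lemma sq_le_pow_four_add_sq_of_le_one {θ : ℝ} (h0 : 0 ≤ θ) (h1 : θ ≤ 1) :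
    θ ^ 2 ≤ (θ - θ ^ 3 / 6) ^ 4 + (θ - θ ^ 3 / 6) ^ 2 := by
  have hu : 1 - 2 * θ ^ 2 / 3 ≤ (1 - θ ^ 2 / 6) ^ 4 := by
    have := one_add_mul_le_pow (a := -(θ ^ 2 / 6)) (by nlinarith) 4
    linarith
  have hsq : θ ^ 2 ≤ 1 := by nlinarith
  have hθu : θ ^ 2 * (1 / 3 - θ ^ 2 / 36) ≤ θ ^ 2 * (1 - θ ^ 2 / 6) ^ 4 := by
    gcongr; linarith
  nlinarith [sq_nonneg θ]

lemma sq_le_sin_pow_four_add_sin_sq_of_le_one {θ : ℝ} (h0 : 0 ≤ θ) (h1 : θ ≤ 1) :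
    θ ^ 2 ≤ sin θ ^ 4 + sin θ ^ 2 := by
  have hs : 0 ≤ θ - θ ^ 3 / 6 := by nlinarith [mul_nonneg h0 (mul_nonneg h0 (sub_nonneg.2 h1))]
  calc θ ^ 2 ≤ (θ - θ ^ 3 / 6) ^ 4 + (θ - θ ^ 3 / 6) ^ 2 := sq_le_pow_four_add_sq_of_le_one h0 h1
    _ ≤ sin θ ^ 4 + sin θ ^ 2 := by gcongr <;> exact sin_ge_sub_cube h0

lemma sub_sq_le_cos_pow_four_add_cos_sq {φ : ℝ} (h0 : 0 ≤ φ) (h1 : φ ≤ 2 / π) :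
    (π / 2 - φ) ^ 2 ≤ (π ^ 2 / 4 - 1) * cos φ ^ 4 + cos φ ^ 2 := by
  have hπ : 3 < π := pi_gt_three
  have hπφ : π * φ ≤ 2 := by rwa [le_div_iff₀ (by positivity), mul_comm] at h1
  have hφ : φ ^ 2 ≤ 1 := by nlinarith
  have hc : 1 - φ ^ 2 / 2 ≤ cos φ := one_sub_sq_div_two_le_cos
  have hc2 : 1 - φ ^ 2 ≤ cos φ ^ 2 := by nlinarith [sq_nonneg (φ ^ 2)]
  have hc4 : 1 - 2 * φ ^ 2 ≤ cos φ ^ 4 := by nlinarith [sq_nonneg (φ ^ 2)]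
  nlinarith [mul_nonneg (mul_nonneg pi_pos.le h0) (by linarith : (0 : ℝ) ≤ 2 - π * φ),
    mul_le_mul_of_nonneg_left hc4 (by nlinarith : (0 : ℝ) ≤ π ^ 2 / 4 - 1)]

lemma sq_le_sin_pow_four_add_sin_sq_of_nonneg {θ : ℝ} (h0 : 0 ≤ θ) (h1 : θ ≤ π / 2) :
    θ ^ 2 ≤ (π ^ 2 / 4 - 1) * sin θ ^ 4 + sin θ ^ 2 := by
  have hπ : 3.14 < π := pi_gt_d2
  rcases le_total θ 1 with hθ | hθ
  · have hc : (1 : ℝ) ≤ π ^ 2 / 4 - 1 := by nlinarith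
    calc θ ^ 2 ≤ sin θ ^ 4 + sin θ ^ 2 := sq_le_sin_pow_four_add_sin_sq_of_le_one h0 hθ
      _ ≤ (π ^ 2 / 4 - 1) * sin θ ^ 4 + sin θ ^ 2 := by
        gcongr; exact le_mul_of_one_le_left (by positivity) hc
  · have hπ' : π < 3.15 := pi_lt_d2
    have hφ : π / 2 - θ ≤ 2 / π := by
      rw [le_div_iff₀ (by positivity)]; nlinarith
    have h := sub_sq_le_cos_pow_four_add_cos_sq (by linarith : 0 ≤ π / 2 - θ) hφ
    rwa [sub_sub_cancel, cos_pi_div_two_sub] at h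

lemma sq_le_sin_pow_four_add_sin_sq {θ : ℝ} (hθ : |θ| ≤ π / 2) :
    θ ^ 2 ≤ (π ^ 2 / 4 - 1) * sin θ ^ 4 + sin θ ^ 2 := by
  have h := sq_le_sin_pow_four_add_sin_sq_of_nonneg (abs_nonneg θ) hθ
  rwa [← abs_sin_eq_sin_abs_of_abs_le_pi (by linarith [pi_pos]), sq_abs, sq_abs,
    (by decide : Even 4).pow_abs] at h

theorem stmt_3 (x : ℝ) (hx : x ∈ Set.Icc (-1 : ℝ) 1) :
    0 ≤ (π ^ 2 / 4 - 1) * x ^ 4 + x ^ 2 - (arcsin x) ^ 2 := by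
  have h := sq_le_sin_pow_four_add_sin_sq <|
    abs_le.2 ⟨neg_pi_div_two_le_arcsin x, arcsin_le_pi_div_two x⟩
  rw [sin_arcsin hx.1 hx.2] at h
  linarith
end

section
/- For all x ∈ [0,1], arcsin(x) ≤ x / sqrt(1 − (1 − 4/π²)x²). -/
/-!
Put `θ = arcsin x` and `c = 1 - 4 / π ^ 2`. Since `x = sin θ`, the claim is equivalent to
`θ ^ 2 ≤ sin θ ^ 2 * (1 + c * θ ^ 2)` on `[0, π / 2]`, which is an equality at both endpoints
(`c` is chosen for exactly that). On `[0, 6 / 5]` it follows from `sin θ ≥ θ - θ ^ 3 / 6`,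
on `[6 / 5, π / 2]` from `sin θ = cos t ≥ 1 - t ^ 2 / 2` with `t = π / 2 - θ`; both cases
reduce to one-variable polynomial inequalities.
-/

open Real

lemma four_div_pi_sq_le : 4 / π ^ 2 ≤ 41 / 100 := by
  rw [div_le_iff₀ (by positivity)]
  nlinarith [pi_gt_d2]

lemma one_le_sq_one_sub_div_six_mul_one_add {u c : ℝ} (hu0 : 0 ≤ u) (hu : u ≤ 36 / 25)
    (hc : 59 / 100 ≤ c) : 1 ≤ (1 - u / 6) ^ 2 * (1 + c * u) := by
  nlinarith [mul_nonneg hu0 (sub_nonneg.2 hu), mul_nonneg hu0 (sub_nonneg.2 hc),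
    mul_nonneg (mul_nonneg hu0 hu0) (sub_nonneg.2 hc)]

lemma sq_le_sin_sq_mul_one_add_of_le {θ c : ℝ} (hθ0 : 0 ≤ θ) (hθ : θ ≤ 6 / 5)
    (hc : 59 / 100 ≤ c) : θ ^ 2 ≤ sin θ ^ 2 * (1 + c * θ ^ 2) := by
  have hsin : θ * (1 - θ ^ 2 / 6) ≤ sin θ := by
    linarith [sin_ge_sub_cube hθ0]
  have hsq : (θ * (1 - θ ^ 2 / 6)) ^ 2 ≤ sin θ ^ 2 :=
    pow_le_pow_left₀ (mul_nonneg hθ0 (by nlinarith)) hsin 2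
  have key := one_le_sq_one_sub_div_six_mul_one_add (sq_nonneg θ) (by nlinarith) hc
  calc θ ^ 2 ≤ θ ^ 2 * ((1 - θ ^ 2 / 6) ^ 2 * (1 + c * θ ^ 2)) :=
        le_mul_of_one_le_right (sq_nonneg θ) key
    _ = (θ * (1 - θ ^ 2 / 6)) ^ 2 * (1 + c * θ ^ 2) := by ring
    _ ≤ sin θ ^ 2 * (1 + c * θ ^ 2) := by gcongr

lemma sq_le_one_sub_sq_div_two_sq_mul {a t : ℝ} (ha1 : 1.5707 < a) (ha2 : a < 1.5708)
    (ht0 : 0 ≤ t) (ht : t ≤ 0.371) :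
    (a - t) ^ 2 ≤ (1 - t ^ 2 / 2) ^ 2 * (1 + (1 - 1 / a ^ 2) * (a - t) ^ 2) := by
  have hle_pow : a ^ 2 * (a - t) ^ 2 * t * (1 - t ^ 2 / 4) ≤ a ^ 4 * t := by
    have hat : (a - t) ^ 2 ≤ a ^ 2 := pow_le_pow_left₀ (by linarith) (by linarith) 2
    nlinarith [mul_nonneg (mul_nonneg (sq_nonneg a) (sq_nonneg (a - t)))
        (mul_nonneg ht0 (sq_nonneg t)),
      mul_nonneg (sq_nonneg a) (mul_nonneg ht0 (sub_nonneg.2 hat))]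
  have ha4 : a ^ 4 ≤ 6.09 := by
    have : a ^ 2 ≤ 2.4675 := by nlinarith
    nlinarith [sq_nonneg a]
  have hge : (1 - t ^ 2) * (3.1414 - t) ≤ (1 - t ^ 2 / 2) ^ 2 * (2 * a - t) := by
    have : 1 - t ^ 2 ≤ (1 - t ^ 2 / 2) ^ 2 := by nlinarith [sq_nonneg (t ^ 2)]
    calc (1 - t ^ 2) * (3.1414 - t) ≤ (1 - t ^ 2 / 2) ^ 2 * (3.1414 - t) := by gcongr; linarith
      _ ≤ _ := by gcongr; linarith
  have hpoly : a ^ 2 * (a - t) ^ 2 * t * (1 - t ^ 2 / 4) ≤ (1 - t ^ 2 / 2) ^ 2 * (2 * a - t) := by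
    nlinarith [mul_nonneg ht0 (sub_nonneg.2 ht), mul_nonneg ht0 (sq_nonneg t)]
  -- Multiplied by `a ^ 2`, the claim is `t * hpoly`,
  -- because `1 - (1 - t ^ 2 / 2) ^ 2 = t ^ 2 * (1 - t ^ 2 / 4)`.
  rw [← mul_le_mul_iff_of_pos_left (by positivity : 0 < a ^ 2)]
  have hexp : a ^ 2 * ((1 - t ^ 2 / 2) ^ 2 * (1 + (1 - 1 / a ^ 2) * (a - t) ^ 2))
      = (1 - t ^ 2 / 2) ^ 2 * (t * (2 * a - t) + a ^ 2 * (a - t) ^ 2) := by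
    field_simp
    ring
  rw [hexp]
  nlinarith [mul_le_mul_of_nonneg_left hpoly ht0]

lemma sq_le_sin_sq_mul_one_add_of_ge {θ : ℝ} (hθ : 6 / 5 ≤ θ) (hθπ : θ ≤ π / 2) :
    θ ^ 2 ≤ sin θ ^ 2 * (1 + (1 - 4 / π ^ 2) * θ ^ 2) := by
  obtain ⟨t, rfl⟩ : ∃ t, θ = π / 2 - t := ⟨π / 2 - θ, by ring⟩
  have hπ1 := pi_gt_d4
  have hπ2 := pi_lt_d4
  have hpoly := sq_le_one_sub_sq_div_two_sq_mul (a := π / 2) (t := t) (by linarith) (by linarith)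
    (by linarith) (by linarith)
  rw [show 1 / (π / 2) ^ 2 = 4 / π ^ 2 by field_simp; ring] at hpoly
  have hcos : (1 - t ^ 2 / 2) ^ 2 ≤ sin (π / 2 - t) ^ 2 := by
    rw [sin_pi_div_two_sub]
    exact pow_le_pow_left₀ (by nlinarith) one_sub_sq_div_two_le_cos 2
  have hfac : 0 ≤ 1 + (1 - 4 / π ^ 2) * (π / 2 - t) ^ 2 := by
    nlinarith [four_div_pi_sq_le, sq_nonneg (π / 2 - t)]
  exact hpoly.trans (mul_le_mul_of_nonneg_right hcos hfac)

lemma sq_le_sin_sq_mul_one_add {θ : ℝ} (hθ0 : 0 ≤ θ) (hθπ : θ ≤ π / 2) :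
    θ ^ 2 ≤ sin θ ^ 2 * (1 + (1 - 4 / π ^ 2) * θ ^ 2) := by
  rcases le_total θ (6 / 5) with hθ | hθ
  · exact sq_le_sin_sq_mul_one_add_of_le hθ0 hθ (by linarith [four_div_pi_sq_le])
  · exact sq_le_sin_sq_mul_one_add_of_ge hθ hθπ

lemma le_div_sqrt_of_sq_le_sq_mul_one_add {x y c : ℝ} (hx : 0 ≤ x) (hy : 0 ≤ y)
    (hD : 0 < 1 - c * x ^ 2) (h : y ^ 2 ≤ x ^ 2 * (1 + c * y ^ 2)) :
    y ≤ x / √(1 - c * x ^ 2) := by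
  rw [le_div_iff₀ (sqrt_pos.2 hD)]
  calc y * √(1 - c * x ^ 2) = √(y ^ 2 * (1 - c * x ^ 2)) := by
        rw [sqrt_mul (sq_nonneg y), sqrt_sq hy]
    _ ≤ √(x ^ 2) := sqrt_le_sqrt (by nlinarith)
    _ = x := sqrt_sq hx

theorem stmt_4 (x : ℝ) (hx : x ∈ Set.Icc (0 : ℝ) 1) :
    arcsin x ≤ x / Real.sqrt (1 - (1 - 4 / π ^ 2) * x ^ 2) := by
  obtain ⟨hx0, hx1⟩ := hx
  have hθ := sq_le_sin_sq_mul_one_add (arcsin_nonneg.2 hx0) (arcsin_le_pi_div_two x)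
  rw [sin_arcsin (by linarith) hx1] at hθ
  have hD : 0 < 1 - (1 - 4 / π ^ 2) * x ^ 2 := by
    have hk : 0 ≤ 1 - 4 / π ^ 2 := by linarith [four_div_pi_sq_le]
    have : 0 < 4 / π ^ 2 := by positivity
    nlinarith [mul_nonneg hk (sub_nonneg.2 (pow_le_one₀ hx0 hx1 : x ^ 2 ≤ 1))]
  exact le_div_sqrt_of_sq_le_sq_mul_one_add hx0 (arcsin_nonneg.2 hx0) hD hθ
end

section
/- Let W ∈ R^{n×p} satisfy, for all unit vectors x, y ∈ S^{p-1}: ‖x−y‖² − ε ≤ β^{-1}‖ASU(Wx) − ASU(Wy)‖² ≤ ‖x−y‖² + ε, with β > 0 and ε ∈ [0,1). Then for all x, y ∈ S^{p-1} (with ASU(Wx), ASU(Wy) nonzero), ‖ASU(Wx)/‖ASU(Wx)‖ − ASU(Wy)/‖ASU(Wy)‖‖² ≤ ‖x−y‖² + 5ε/(1+ε). -/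
/-!
Since `ASU` is odd, the lower isometry bound at the pair `(z, -z)` gives
`‖ASU(Wz)‖² ≥ β (1 - ε/4)` for every unit vector `z`. For vectors `a, b` with normalizations
`â, b̂` one has `‖a - b‖² = (‖a‖ - ‖b‖)² + ‖a‖ ‖b‖ ‖â - b̂‖²`, so with `a = ASU(Wx)`,
`b = ASU(Wy)` and `d = ‖x - y‖²` the upper isometry bound yields
`‖â - b̂‖² ≤ ‖a - b‖² / (‖a‖ ‖b‖) ≤ 4 (d + ε) / (4 - ε)`. Together with `‖â - b̂‖² ≤ 4` this is
at most `d + 5ε / (1 + ε)`.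
-/

open Real

/-- The entrywise `ASU` map `x ↦ (2/π) arcsin (Wx)`. -/
noncomputable def ASUvec {n p : ℕ} (W : Matrix (Fin n) (Fin p) ℝ)
    (x : EuclideanSpace ℝ (Fin p)) : EuclideanSpace ℝ (Fin n) :=
  WithLp.toLp 2 (fun i => (2 / π) * arcsin (∑ j, W i j * x j))

lemma ASUvec_neg {n p : ℕ} (W : Matrix (Fin n) (Fin p) ℝ) (x : EuclideanSpace ℝ (Fin p)) :
    ASUvec W (-x) = -ASUvec W x := by
  ext i
  simp [ASUvec, Finset.sum_neg_distrib, arcsin_neg]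

theorem norm_sub_neg_sq {E : Type*} [NormedAddCommGroup E] [NormedSpace ℝ E] (v : E) :
    ‖v - -v‖ ^ 2 = 4 * ‖v‖ ^ 2 := by
  rw [sub_neg_eq_add, ← two_smul ℝ, norm_smul, mul_pow]
  norm_num

theorem four_sub_mul_le_four_mul_norm_sq_of_odd {E F : Type*} [NormedAddCommGroup E]
    [NormedSpace ℝ E] [NormedAddCommGroup F] [NormedSpace ℝ F] {f : E → F}
    (hf : ∀ z, f (-z) = -f z) {β ε : ℝ} (hβ : 0 < β) {z : E} (hz : ‖z‖ = 1)
    (h : ‖z - -z‖ ^ 2 - ε ≤ β⁻¹ * ‖f z - f (-z)‖ ^ 2) :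
    (4 - ε) * β ≤ 4 * ‖f z‖ ^ 2 := by
  rw [hf, norm_sub_neg_sq, norm_sub_neg_sq, hz, inv_mul_eq_div, le_div_iff₀ hβ] at h
  linarith

theorem norm_normalize_sub_normalize_sq_le_four {E : Type*} [NormedAddCommGroup E]
    [NormedSpace ℝ E] {a b : E} (ha : a ≠ 0) (hb : b ≠ 0) :
    ‖NormedSpace.normalize a - NormedSpace.normalize b‖ ^ 2 ≤ 4 := by
  have hle : ‖NormedSpace.normalize a - NormedSpace.normalize b‖ ≤ 2 :=
    calc ‖NormedSpace.normalize a - NormedSpace.normalize b‖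
        ≤ ‖NormedSpace.normalize a‖ + ‖NormedSpace.normalize b‖ := norm_sub_le _ _
      _ = 2 := by
        rw [NormedSpace.norm_normalize_eq_one_iff.mpr ha,
          NormedSpace.norm_normalize_eq_one_iff.mpr hb]
        norm_num
  nlinarith [norm_nonneg (NormedSpace.normalize a - NormedSpace.normalize b)]

section InnerProductSpace

variable {E : Type*} [NormedAddCommGroup E] [InnerProductSpace ℝ E]

theorem norm_sub_sq_eq_sq_sub_norm_add_mul_norm_normalize_sub_sq (a b : E) :
    ‖a - b‖ ^ 2 = (‖a‖ - ‖b‖) ^ 2 +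
      ‖a‖ * ‖b‖ * ‖NormedSpace.normalize a - NormedSpace.normalize b‖ ^ 2 := by
  rcases eq_or_ne a 0 with rfl | ha
  · simp
  rcases eq_or_ne b 0 with rfl | hb
  · simp
  have ha' : ‖a‖ ≠ 0 := norm_ne_zero_iff.mpr ha
  have hb' : ‖b‖ ≠ 0 := norm_ne_zero_iff.mpr hb
  rw [norm_sub_sq_real (NormedSpace.normalize a), NormedSpace.norm_normalize_eq_one_iff.mpr ha,
    NormedSpace.norm_normalize_eq_one_iff.mpr hb, NormedSpace.normalize, NormedSpace.normalize,
    real_inner_smul_left, real_inner_smul_right, norm_sub_sq_real]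
  field_simp
  ring

theorem norm_mul_norm_mul_norm_normalize_sub_sq_le (a b : E) :
    ‖a‖ * ‖b‖ * ‖NormedSpace.normalize a - NormedSpace.normalize b‖ ^ 2 ≤ ‖a - b‖ ^ 2 := by
  rw [norm_sub_sq_eq_sq_sub_norm_add_mul_norm_normalize_sub_sq a b]
  nlinarith [sq_nonneg (‖a‖ - ‖b‖)]

end InnerProductSpace

theorem le_mul_of_le_sq_of_le_sq {c x y : ℝ} (hx : 0 ≤ x) (hy : 0 ≤ y)
    (hcx : c ≤ x ^ 2) (hcy : c ≤ y ^ 2) : c ≤ x * y := by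
  rcases le_total x y with h | h
  · nlinarith [mul_le_mul_of_nonneg_left h hx]
  · nlinarith [mul_le_mul_of_nonneg_left h hy]

theorem le_add_five_mul_div_one_add {d ε t : ℝ} (hd : 0 ≤ d) (hε : ε ∈ Set.Ico (0 : ℝ) 1)
    (ht : t ≤ 4) (hdt : (4 - ε) * t ≤ 4 * (d + ε)) :
    t ≤ d + 5 * ε / (1 + ε) := by
  obtain ⟨hε0, hε1⟩ := hε
  rw [← sub_le_iff_le_add', le_div_iff₀ (by linarith)]
  rcases le_or_gt (4 - ε) (d * (1 + ε)) with hfar | hnear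
  · nlinarith
  · nlinarith [mul_nonneg hε0 hd, mul_nonneg hε0 (sub_nonneg.mpr ht)]

theorem stmt_8_general {n p : ℕ} (W : Matrix (Fin n) (Fin p) ℝ)
    (β ε : ℝ) (hβ : 0 < β) (hε : ε ∈ Set.Ico (0 : ℝ) 1)
    (hiso : ∀ x y : EuclideanSpace ℝ (Fin p), ‖x‖ = 1 → ‖y‖ = 1 →
      ‖x - y‖ ^ 2 - ε ≤ β⁻¹ * ‖ASUvec W x - ASUvec W y‖ ^ 2 ∧
      β⁻¹ * ‖ASUvec W x - ASUvec W y‖ ^ 2 ≤ ‖x - y‖ ^ 2 + ε) :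
    ∀ x y : EuclideanSpace ℝ (Fin p), ‖x‖ = 1 → ‖y‖ = 1 →
      ASUvec W x ≠ 0 → ASUvec W y ≠ 0 →
      ‖(‖ASUvec W x‖⁻¹ • ASUvec W x) - (‖ASUvec W y‖⁻¹ • ASUvec W y)‖ ^ 2 ≤
        ‖x - y‖ ^ 2 + 5 * ε / (1 + ε) := by
  intro x y hx hy hax hay
  set a := ASUvec W x
  set b := ASUvec W y
  change ‖NormedSpace.normalize a - NormedSpace.normalize b‖ ^ 2 ≤ _
  set t := ‖NormedSpace.normalize a - NormedSpace.normalize b‖ ^ 2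
  have hlow (z : EuclideanSpace ℝ (Fin p)) (hz : ‖z‖ = 1) :
      (4 - ε) * β / 4 ≤ ‖ASUvec W z‖ ^ 2 := by
    have := four_sub_mul_le_four_mul_norm_sq_of_odd (ASUvec_neg W) hβ hz
      (hiso z (-z) hz (by rwa [norm_neg])).1
    linarith
  have hab : (4 - ε) * β / 4 ≤ ‖a‖ * ‖b‖ :=
    le_mul_of_le_sq_of_le_sq (norm_nonneg a) (norm_nonneg b) (hlow x hx) (hlow y hy)
  have hdist : ‖a - b‖ ^ 2 ≤ (‖x - y‖ ^ 2 + ε) * β := by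
    rw [← div_le_iff₀ hβ, div_eq_inv_mul]
    exact (hiso x y hx hy).2
  refine le_add_five_mul_div_one_add (sq_nonneg _) hε
    (norm_normalize_sub_normalize_sq_le_four hax hay) (le_of_mul_le_mul_right ?_ hβ)
  calc (4 - ε) * t * β = 4 * ((4 - ε) * β / 4 * t) := by ring
    _ ≤ 4 * (‖a‖ * ‖b‖ * t) := by gcongr
    _ ≤ 4 * ((‖x - y‖ ^ 2 + ε) * β) := by
      gcongr 4 * ?_
      exact (norm_mul_norm_mul_norm_normalize_sub_sq_le a b).trans hdist
    _ = 4 * (‖x - y‖ ^ 2 + ε) * β := by ring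

theorem stmt_8 {n p : ℕ} (W : Matrix (Fin n) (Fin p) ℝ)
    (hW : ∀ i, ∑ j, W i j ^ 2 = 1)
    (β ε : ℝ) (hβ : 0 < β) (hε : ε ∈ Set.Ico (0 : ℝ) 1)
    (hiso : ∀ x y : EuclideanSpace ℝ (Fin p), ‖x‖ = 1 → ‖y‖ = 1 →
      ‖x - y‖ ^ 2 - ε ≤ β⁻¹ * ‖ASUvec W x - ASUvec W y‖ ^ 2 ∧
      β⁻¹ * ‖ASUvec W x - ASUvec W y‖ ^ 2 ≤ ‖x - y‖ ^ 2 + ε) :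
    ∀ x y : EuclideanSpace ℝ (Fin p), ‖x‖ = 1 → ‖y‖ = 1 →
      ASUvec W x ≠ 0 → ASUvec W y ≠ 0 →
      ‖(‖ASUvec W x‖⁻¹ • ASUvec W x) - (‖ASUvec W y‖⁻¹ • ASUvec W y)‖ ^ 2 ≤
        ‖x - y‖ ^ 2 + 5 * ε / (1 + ε) :=
  stmt_8_general W β ε hβ hε hiso
end

section
/- For every integer p ≥ 27, ∫₀¹ (1 + x²)^{-(p/6 − 1)} dx ≤ sqrt(6/(p−6)). -/
/-! Write a = p/6 - 1 ≥ 7/2 and c = 2a/7 ≥ 1. Bernoulli's inequality (1 + x²)^c ≥ 1 + c x² gives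
(1 + x²)^(-a) ≤ (1 + c x²)^(-7/2), whose integral over [0, 1] has the elementary closed form
(8c² + 20c + 15) / (15 (1 + c)^(5/2)); that this is at most a^(-1/2) = (7c/2)^(-1/2) is a
polynomial inequality in c. -/

open Real

lemma one_add_rpow_neg_mul_le {s c b : ℝ} (hs : 0 ≤ s) (hc : 1 ≤ c) (hb : 0 ≤ b) :
    (1 + s) ^ (-(c * b)) ≤ (1 + c * s) ^ (-b) := by
  have hbern : 1 + c * s ≤ (1 + s) ^ c := one_add_mul_self_le_rpow_one_add (by linarith) hc
  rw [rpow_neg (by positivity), rpow_neg (by positivity), rpow_mul (by positivity)]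
  exact inv_anti₀ (by positivity) (rpow_le_rpow (by positivity) hbern hb)

lemma hasDerivAt_one_add_mul_sq_rpow_neg_seven_halves {c : ℝ} (hc : 0 ≤ c) (x : ℝ) :
    HasDerivAt (fun x ↦ x * (8 * c ^ 2 * x ^ 4 + 20 * c * x ^ 2 + 15) /
        (15 * (1 + c * x ^ 2) ^ 2 * √(1 + c * x ^ 2)))
      ((1 + c * x ^ 2) ^ (-(7 / 2 : ℝ))) x := by
  have hu : 0 < 1 + c * x ^ 2 := by positivity
  have hU : HasDerivAt (fun x ↦ 1 + c * x ^ 2) (c * (2 * x)) x := by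
    simpa using ((hasDerivAt_pow 2 x).const_mul c).const_add 1
  have hN : HasDerivAt (fun x ↦ x * (8 * c ^ 2 * x ^ 4 + 20 * c * x ^ 2 + 15)) _ x :=
    (hasDerivAt_id x).mul ((((hasDerivAt_pow 4 x).const_mul _).add
      ((hasDerivAt_pow 2 x).const_mul _)).add_const 15)
  have hD : HasDerivAt (fun x ↦ 15 * (1 + c * x ^ 2) ^ 2 * √(1 + c * x ^ 2)) _ x :=
    ((hU.pow 2).const_mul 15).mul ((hasDerivAt_sqrt hu.ne').comp x hU)
  refine (hN.div hD (by positivity)).congr_deriv ?_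
  have hpow : (1 + c * x ^ 2) ^ (-(7 / 2 : ℝ)) = ((1 + c * x ^ 2) ^ 3 * √(1 + c * x ^ 2))⁻¹ := by
    rw [rpow_neg hu.le, sqrt_eq_rpow, ← rpow_natCast (1 + c * x ^ 2) 3, ← rpow_add hu]
    norm_num
  rw [hpow, Pi.pow_apply, id]
  set s := √(1 + c * x ^ 2)
  have hs : s ^ 2 = 1 + c * x ^ 2 := sq_sqrt hu.le
  have hs0 : s ≠ 0 := (sqrt_pos.mpr hu).ne'
  rw [← hs]
  field_simp
  linear_combination s ^ 2 * (15 + 60 * c * x ^ 2 + 40 * c ^ 2 * x ^ 4) * hs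

lemma integral_one_add_mul_sq_rpow_neg_seven_halves {c : ℝ} (hc : 0 ≤ c) :
    ∫ x in (0 : ℝ)..1, (1 + c * x ^ 2) ^ (-(7 / 2 : ℝ)) =
      (8 * c ^ 2 + 20 * c + 15) / (15 * (1 + c) ^ 2 * √(1 + c)) := by
  have hcont : Continuous fun x : ℝ ↦ (1 + c * x ^ 2) ^ (-(7 / 2 : ℝ)) :=
    (by fun_prop : Continuous fun x : ℝ ↦ 1 + c * x ^ 2).rpow_const
      fun x ↦ Or.inl (by positivity)
  rw [intervalIntegral.integral_eq_sub_of_hasDerivAt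
    (fun x _ ↦ hasDerivAt_one_add_mul_sq_rpow_neg_seven_halves hc x) (hcont.intervalIntegrable 0 1)]
  norm_num

lemma seven_halves_integral_value_le {c : ℝ} (hc : 0 < c) :
    (8 * c ^ 2 + 20 * c + 15) / (15 * (1 + c) ^ 2 * √(1 + c)) ≤ (√(c * (7 / 2)))⁻¹ := by
  rw [div_le_iff₀ (by positivity), ← div_eq_inv_mul, le_div_iff₀ (by positivity),
    ← pow_le_pow_iff_left₀ (by positivity) (by positivity) two_ne_zero, mul_pow, mul_pow,
    sq_sqrt (by positivity), sq_sqrt (by positivity)]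
  -- the difference of the two sides is (2c⁵ + 10c⁴ + 20c³ + 300c² + 675c + 450) / 2
  nlinarith [pow_pos hc 5, pow_pos hc 4, pow_pos hc 3, pow_pos hc 2]

theorem integral_one_add_sq_rpow_neg_le {a : ℝ} (ha : 7 / 2 ≤ a) :
    ∫ x in (0 : ℝ)..1, (1 + x ^ 2) ^ (-a) ≤ (√a)⁻¹ := by
  obtain ⟨c, rfl⟩ : ∃ c, a = c * (7 / 2) := ⟨2 * a / 7, by ring⟩
  have hc : 1 ≤ c := by linarith
  calc ∫ x in (0 : ℝ)..1, (1 + x ^ 2) ^ (-(c * (7 / 2)))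
      ≤ ∫ x in (0 : ℝ)..1, (1 + c * x ^ 2) ^ (-(7 / 2 : ℝ)) := by
        refine intervalIntegral.integral_mono_on zero_le_one ?_ ?_ fun x _ ↦ ?_
        · exact ((by fun_prop : Continuous fun x : ℝ ↦ 1 + x ^ 2).rpow_const
            fun x ↦ Or.inl (by positivity)).intervalIntegrable 0 1
        · exact ((by fun_prop : Continuous fun x : ℝ ↦ 1 + c * x ^ 2).rpow_const
            fun x ↦ Or.inl (by positivity)).intervalIntegrable 0 1
        · exact one_add_rpow_neg_mul_le (sq_nonneg x) hc (by norm_num)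
    _ = (8 * c ^ 2 + 20 * c + 15) / (15 * (1 + c) ^ 2 * √(1 + c)) :=
        integral_one_add_mul_sq_rpow_neg_seven_halves (by positivity)
    _ ≤ (√(c * (7 / 2)))⁻¹ := seven_halves_integral_value_le (by positivity)

theorem stmt_12 (p : ℕ) (hp : 27 ≤ p) :
    (∫ x in (0 : ℝ)..1, (1 + x ^ 2) ^ (-((p : ℝ) / 6 - 1))) ≤
      Real.sqrt (6 / ((p : ℝ) - 6)) := by
  have hp' : (27 : ℝ) ≤ p := by exact_mod_cast hp
  have hinv : 6 / ((p : ℝ) - 6) = ((p : ℝ) / 6 - 1)⁻¹ := by field_simp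
  rw [hinv, sqrt_inv]
  exact integral_one_add_sq_rpow_neg_le (by linarith)
end

section
/- For every integer p ≥ 27, ∫₀¹ x² (1 + x²)^{-(p/3 − 1)} dx ≤ 3^{3/2} / (2 (p−6)^{3/2}). -/
/-!
With `a = p / 3 - 1`, the substitution `t = x² / (1 + x²)` turns the integral into
`½ ∫₀^{1/2} t^{1/2} (1 - t)^{a - 5/2} dt`, which is at most half the Beta integral
`B(3/2, a - 3/2) = Γ(3/2) Γ(a - 3/2) / Γ(a)`. Log-convexity of `Γ` gives
`Γ(a - 3/2) ≤ Γ(a - 2) √(a - 2)`, so the integral is at most `√π / (4 (a - 1) √(a - 2))`,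
and this is `≤ 1 / (2 (a - 1)^{3/2})` as soon as `π (a - 1) ≤ 4 (a - 2)`, e.g. for `a ≥ 6`.
Since `p - 6 = 3 (a - 1)`, that is the claim.
-/

open Real MeasureTheory

namespace Real

theorem Gamma_add_half_le_mul_sqrt {x : ℝ} (hx : 0 < x) :
    Gamma (x + 1 / 2) ≤ Gamma x * √x := by
  have hΓ : 0 < Gamma x := Gamma_pos_of_pos hx
  have hconv := convexOn_log_Gamma.2 (Set.mem_Ioi.2 hx) (Set.mem_Ioi.2 (by linarith : 0 < x + 1))
    (by norm_num : (0 : ℝ) ≤ 1 / 2) (by norm_num : (0 : ℝ) ≤ 1 / 2) (by norm_num)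
  simp only [Function.comp_apply, smul_eq_mul, Gamma_add_one hx.ne', log_mul hx.ne' hΓ.ne'] at hconv
  rw [show 1 / 2 * x + 1 / 2 * (x + 1) = x + 1 / 2 by ring] at hconv
  rw [← log_le_log_iff (Gamma_pos_of_pos (by linarith)) (by positivity),
    log_mul hΓ.ne' (sqrt_pos.2 hx).ne', log_sqrt hx.le]
  linarith

theorem Gamma_three_halves : Gamma (3 / 2) = √π / 2 := by
  rw [show (3 / 2 : ℝ) = 1 / 2 + 1 by norm_num, Gamma_add_one (by norm_num), Gamma_one_half_eq]
  ring

theorem Gamma_sub_three_halves_div_Gamma_le {a : ℝ} (ha : 2 < a) :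
    Gamma (a - 3 / 2) / Gamma a ≤ 1 / ((a - 1) * √(a - 2)) := by
  have ha1 : 0 < a - 1 := by linarith
  have hrec : Gamma a = (a - 1) * (a - 2) * Gamma (a - 2) := by
    conv_lhs => rw [show a = a - 2 + 1 + 1 by ring]
    rw [Gamma_add_one (by linarith), Gamma_add_one (by linarith)]
    ring_nf
  have hmid := Gamma_add_half_le_mul_sqrt (by linarith : 0 < a - 2)
  rw [show a - 2 + 1 / 2 = a - 3 / 2 by ring] at hmid
  rw [hrec, div_le_div_iff₀ (by positivity) (by positivity)]
  calc Gamma (a - 3 / 2) * ((a - 1) * √(a - 2))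
      ≤ Gamma (a - 2) * √(a - 2) * ((a - 1) * √(a - 2)) := by gcongr
    _ = 1 * ((a - 1) * (a - 2) * Gamma (a - 2)) := by
      rw [show Gamma (a - 2) * √(a - 2) * ((a - 1) * √(a - 2))
        = (a - 1) * Gamma (a - 2) * (√(a - 2) * √(a - 2)) by ring, mul_self_sqrt (by linarith)]
      ring

end Real

theorem Complex.ofReal_rpow_mul_one_sub_rpow {t : ℝ} (ht : t ∈ Set.Icc (0 : ℝ) 1) (u v : ℝ) :
    ((t ^ (u - 1) * (1 - t) ^ (v - 1) : ℝ) : ℂ)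
      = (t : ℂ) ^ ((u : ℂ) - 1) * (1 - (t : ℂ)) ^ ((v : ℂ) - 1) := by
  rw [Complex.ofReal_mul, Complex.ofReal_cpow ht.1, Complex.ofReal_cpow (sub_nonneg.2 ht.2)]
  push_cast
  rfl

theorem intervalIntegrable_rpow_mul_one_sub_rpow {u v : ℝ} (hu : 0 < u) (hv : 0 < v) :
    IntervalIntegrable (fun t : ℝ => t ^ (u - 1) * (1 - t) ^ (v - 1)) volume 0 1 := by
  have hC := (Complex.betaIntegral_convergent (u := u) (v := v) (by simpa) (by simpa)).norm
  refine hC.congr fun t ht => ?_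
  have ht' : t ∈ Set.Icc (0 : ℝ) 1 := by
    rw [Set.uIoc_of_le zero_le_one] at ht
    exact Set.Ioc_subset_Icc_self ht
  rw [← Complex.ofReal_rpow_mul_one_sub_rpow ht', Complex.norm_real, Real.norm_of_nonneg]
  exact mul_nonneg (rpow_nonneg ht'.1 _) (rpow_nonneg (sub_nonneg.2 ht'.2) _)

theorem integral_rpow_mul_one_sub_rpow {u v : ℝ} (hu : 0 < u) (hv : 0 < v) :
    ∫ t in (0 : ℝ)..1, t ^ (u - 1) * (1 - t) ^ (v - 1) = Gamma u * Gamma v / Gamma (u + v) := by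
  have hβ := Complex.Gamma_mul_Gamma_eq_betaIntegral (s := u) (t := v) (by simpa) (by simpa)
  rw [Complex.betaIntegral, ← intervalIntegral.integral_congr fun t ht =>
      Complex.ofReal_rpow_mul_one_sub_rpow (by rwa [Set.uIcc_of_le zero_le_one] at ht) u v,
    intervalIntegral.integral_ofReal, ← Complex.ofReal_add, Complex.Gamma_ofReal,
    Complex.Gamma_ofReal, Complex.Gamma_ofReal] at hβ
  rw [eq_div_iff (Gamma_pos_of_pos (add_pos hu hv)).ne', mul_comm]
  exact_mod_cast hβ.symm

theorem sq_div_one_add_sq_rpow_mul_one_sub_rpow_mul_deriv {x : ℝ} (hx : 0 ≤ x) (a : ℝ) :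
    (x ^ 2 / (1 + x ^ 2)) ^ (1 / 2 : ℝ) * (1 - x ^ 2 / (1 + x ^ 2)) ^ (a - 5 / 2)
      * (2 * x / (1 + x ^ 2) ^ 2) = 2 * (x ^ 2 * (1 + x ^ 2) ^ (-a)) := by
  have hy : 0 < 1 + x ^ 2 := by positivity
  have hsqrt : (x ^ 2 / (1 + x ^ 2)) ^ (1 / 2 : ℝ) = x / (1 + x ^ 2) ^ (1 / 2 : ℝ) := by
    rw [div_rpow (by positivity) hy.le, ← sqrt_eq_rpow, sqrt_sq hx]
  have hcompl : 1 - x ^ 2 / (1 + x ^ 2) = (1 + x ^ 2)⁻¹ := by field_simp; ring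
  have hpow : (1 + x ^ 2) ^ a
      = (1 + x ^ 2) ^ (1 / 2 : ℝ) * (1 + x ^ 2) ^ (a - 5 / 2) * (1 + x ^ 2) ^ 2 := by
    rw [← rpow_natCast (1 + x ^ 2) 2, ← rpow_add hy, ← rpow_add hy]
    congr 1
    push_cast
    ring
  rw [hsqrt, hcompl, inv_rpow hy.le, rpow_neg hy.le, hpow]
  field_simp

theorem integral_sq_mul_one_add_sq_rpow_neg (a : ℝ) :
    ∫ x in (0 : ℝ)..1, x ^ 2 * (1 + x ^ 2) ^ (-a)
      = 2⁻¹ * ∫ t in (0 : ℝ)..(1 / 2), t ^ (1 / 2 : ℝ) * (1 - t) ^ (a - 5 / 2) := by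
  have hderiv (x : ℝ) : HasDerivAt (fun x => x ^ 2 / (1 + x ^ 2)) (2 * x / (1 + x ^ 2) ^ 2) x := by
    have hy : 1 + x ^ 2 ≠ 0 := by positivity
    have hsq : HasDerivAt (fun x : ℝ => x ^ 2) (2 * x) x := by simpa using hasDerivAt_pow 2 x
    refine (hsq.fun_div (hsq.const_add 1) hy).congr_deriv ?_
    field_simp
    ring
  have hsub := intervalIntegral.integral_comp_mul_deriv_of_deriv_nonneg
    (a := 0) (b := 1) (g := fun t => t ^ (1 / 2 : ℝ) * (1 - t) ^ (a - 5 / 2))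
    (fun x _ => (hderiv x).continuousAt.continuousWithinAt) (fun x _ => hderiv x)
    (fun x hx => by
      simp only [zero_le_one, inf_of_le_left, sup_of_le_right, Set.mem_Ioo] at hx
      have := hx.1
      positivity)
  simp only [Function.comp_apply] at hsub
  rw [intervalIntegral.integral_congr fun x hx => sq_div_one_add_sq_rpow_mul_one_sub_rpow_mul_deriv
      (by rw [Set.uIcc_of_le zero_le_one] at hx; exact hx.1) a] at hsub
  rw [intervalIntegral.integral_const_mul, show (0 : ℝ) ^ 2 / (1 + 0 ^ 2) = 0 by norm_num,
    show (1 : ℝ) ^ 2 / (1 + 1 ^ 2) = 1 / 2 by norm_num] at hsub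
  linarith

theorem integral_sq_mul_one_add_sq_rpow_neg_le {a : ℝ} (ha : 3 / 2 < a) :
    ∫ x in (0 : ℝ)..1, x ^ 2 * (1 + x ^ 2) ^ (-a)
      ≤ Gamma (3 / 2) * Gamma (a - 3 / 2) / Gamma a / 2 := by
  have hβ := integral_rpow_mul_one_sub_rpow (u := 3 / 2) (v := a - 3 / 2) (by norm_num) (by linarith)
  have hint := intervalIntegrable_rpow_mul_one_sub_rpow (u := 3 / 2) (v := a - 3 / 2)
    (by norm_num) (by linarith)
  rw [add_sub_cancel] at hβ
  rw [show (3 / 2 : ℝ) - 1 = 1 / 2 by norm_num, show a - 3 / 2 - 1 = a - 5 / 2 by ring] at hβ hint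
  have hnonneg : ∀ᵐ t ∂volume.restrict (Set.Ioc (0 : ℝ) 1),
      0 ≤ t ^ (1 / 2 : ℝ) * (1 - t) ^ (a - 5 / 2) :=
    (ae_restrict_mem measurableSet_Ioc).mono fun t ht =>
      mul_nonneg (rpow_nonneg ht.1.le _) (rpow_nonneg (sub_nonneg.2 ht.2) _)
  have hmono := intervalIntegral.integral_mono_interval le_rfl (by norm_num : (0 : ℝ) ≤ 1 / 2)
    (by norm_num : (1 / 2 : ℝ) ≤ 1) hnonneg hint
  rw [integral_sq_mul_one_add_sq_rpow_neg, ← hβ]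
  linarith

theorem Gamma_three_halves_mul_Gamma_sub_div_le {a : ℝ} (ha : 6 ≤ a) :
    Gamma (3 / 2) * Gamma (a - 3 / 2) / Gamma a / 2 ≤ 1 / (2 * (a - 1) ^ (3 / 2 : ℝ)) := by
  have ha1 : 0 < a - 1 := by linarith
  have hs2 : 0 < √(a - 2) := sqrt_pos.2 (by linarith)
  have hkey : √π * √(a - 1) ≤ 2 * √(a - 2) := by
    calc √π * √(a - 1) = √(π * (a - 1)) := (sqrt_mul pi_pos.le _).symm
      _ ≤ √(2 ^ 2 * (a - 2)) := sqrt_le_sqrt (by nlinarith [pi_lt_d2])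
      _ = 2 * √(a - 2) := by rw [sqrt_mul (by norm_num), sqrt_sq zero_le_two]
  have hrpow : (a - 1) ^ (3 / 2 : ℝ) = (a - 1) * √(a - 1) := by
    rw [show (3 / 2 : ℝ) = 1 + 1 / 2 by norm_num, rpow_add ha1, rpow_one, sqrt_eq_rpow]
  calc Gamma (3 / 2) * Gamma (a - 3 / 2) / Gamma a / 2
      ≤ √π / 2 * (1 / ((a - 1) * √(a - 2))) / 2 := by
        rw [Gamma_three_halves, mul_div_assoc]
        gcongr √π / 2 * ?_ / 2
        exact Gamma_sub_three_halves_div_Gamma_le (by linarith : (2 : ℝ) < a)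
    _ = √π * √(a - 1) / (4 * ((a - 1) * √(a - 2) * √(a - 1))) := by
        field_simp
        ring
    _ ≤ 2 * √(a - 2) / (4 * ((a - 1) * √(a - 2) * √(a - 1))) := by gcongr
    _ = 1 / (2 * (a - 1) ^ (3 / 2 : ℝ)) := by
        rw [hrpow]
        field_simp
        ring

theorem stmt_13 (p : ℕ) (hp : 27 ≤ p) :
    (∫ x in (0 : ℝ)..1, x ^ 2 * (1 + x ^ 2) ^ (-((p : ℝ) / 3 - 1))) ≤
      (3 : ℝ) ^ ((3 : ℝ) / 2) / (2 * ((p : ℝ) - 6) ^ ((3 : ℝ) / 2)) := by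
  have hp' : (27 : ℝ) ≤ p := by exact_mod_cast hp
  have hp6 : (p : ℝ) - 6 = 3 * ((p : ℝ) / 3 - 1 - 1) := by ring
  calc (∫ x in (0 : ℝ)..1, x ^ 2 * (1 + x ^ 2) ^ (-((p : ℝ) / 3 - 1)))
      ≤ Gamma (3 / 2) * Gamma ((p : ℝ) / 3 - 1 - 3 / 2) / Gamma ((p : ℝ) / 3 - 1) / 2 :=
        integral_sq_mul_one_add_sq_rpow_neg_le (by linarith)
    _ ≤ 1 / (2 * ((p : ℝ) / 3 - 1 - 1) ^ (3 / 2 : ℝ)) :=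
        Gamma_three_halves_mul_Gamma_sub_div_le (by linarith)
    _ = (3 : ℝ) ^ ((3 : ℝ) / 2) / (2 * ((p : ℝ) - 6) ^ ((3 : ℝ) / 2)) := by
        have h3 : (0 : ℝ) < 3 ^ ((3 : ℝ) / 2) := by positivity
        rw [hp6, mul_rpow (by norm_num) (by linarith)]
        field_simp
end
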